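/- Let the QVE Mx = a + b(x,x) have a minimal nonnegative solution x*, and let B be the tensor with b(x,y)_k = Σ_{i,j} B_{ijk} x_i y_j; write (M⁻¹B) for the tensor of the map (x,y) ↦ M⁻¹b(x,y). Call a finite sequence S₁ ⊆ S₂ ⊆ … ⊆ S_N of subsets of {1,…,n} positivity-showing for an index i if: (i) S₁ = {h : (M⁻¹a)_h > 0}; (ii) for each h and each t ∈ S_{h+1} \ S_h there exist r, s ∈ S_h (possibly r = s) with (M⁻¹B)_{rst} > 0; (iii) i ∈ S_N. Then for each i ∈ {1,…,n}, (x*)_i > 0 if and only if there exists a positivity-showing sequence for i. -/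

import Mathlib

open Matrix Filter Topology

/-- The spectral radius of a real square matrix: the supremum of the norms of
its complex eigenvalues. -/
noncomputable def specRad {n : ℕ} (A : Matrix (Fin n) (Fin n) ℝ) : ℝ :=
  sSup {r : ℝ | ∃ μ ∈ spectrum ℂ (A.map (Complex.ofReal)), ‖μ‖ = r}

/-- An M-matrix: a matrix of the form `s • 1 - P` with `P ≥ 0` and `ρ(P) ≤ s`. -/
def IsMMat {n : ℕ} (A : Matrix (Fin n) (Fin n) ℝ) : Prop :=
  ∃ (s : ℝ) (P : Matrix (Fin n) (Fin n) ℝ),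
    (∀ i j, 0 ≤ P i j) ∧ specRad P ≤ s ∧ A = s • (1 : Matrix (Fin n) (Fin n) ℝ) - P

/-- A nonsingular M-matrix: an M-matrix that is invertible. -/
def IsNsMMat {n : ℕ} (A : Matrix (Fin n) (Fin n) ℝ) : Prop :=
  IsMMat A ∧ IsUnit A.det

/-!
Since `M⁻¹ ≥ 0`, the QVE is equivalent to the fixed-point equation `x = c + β x x` with
`c = M⁻¹ a ≥ 0` and the nonnegative bilinear map `β = M⁻¹ b`, and a positivity-showing sequence
is a chain growing from `{c > 0}` by the step `S ↦ {t | ∃ r s ∈ S, β(e_r, e_s)_t > 0}`.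
The support of a nonnegative solution contains `{c > 0}` and is closed under this step, which
gives one direction. Conversely, if `T` contains `{c > 0}` and is closed under the step, then `x*`
restricted to `T` is still a supersolution; by Knaster–Tarski there is a solution below it, so by
minimality `x*` vanishes off `T`. Taking for `T` the union of the iterates of the step gives the
other direction.

For `M⁻¹ ≥ 0` with `M = s • 1 - P`: when `t > ρ(P)`, Gelfand's formula yields `m` with
`‖(t⁻¹ P) ^ m‖ < 1`, so `(t • 1 - P)⁻¹ = t⁻¹ (∑_{k<m} (t⁻¹ P) ^ k) ∑_k (t⁻¹ P) ^ (m k)` is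
entrywise nonnegative; letting `t ↓ s` only needs continuity of the inverse at the invertible `M`.
-/

lemma mul_geom_sum_mul_tsum_pow_eq_one {R : Type*} [NormedRing R] [HasSummableGeomSeries R]
    {q : R} {m : ℕ} (hm : ‖q ^ m‖ < 1) :
    (1 - q) * ((∑ k ∈ Finset.range m, q ^ k) * ∑' k, (q ^ m) ^ k) = 1 := by
  rw [← mul_assoc, mul_neg_geom_sum, mul_neg_geom_series _ hm]

lemma exists_norm_pow_lt_one_of_spectralRadius_lt_one {A : Type*} [NormedRing A]
    [NormedAlgebra ℂ A] [CompleteSpace A] {a : A} (ha : spectralRadius ℂ a < 1) :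
    ∃ m, ‖a ^ m‖ < 1 := by
  obtain ⟨m, hm, hlt⟩ := ((eventually_ge_atTop 1).and
    ((spectrum.pow_nnnorm_pow_one_div_tendsto_nhds_spectralRadius a).eventually_lt_const ha)).exists
  have hpos : (0 : ℝ) < 1 / m := by positivity
  have : (‖a ^ m‖₊ : ENNReal) < 1 :=
    (ENNReal.rpow_lt_rpow_iff hpos).1 (by rwa [ENNReal.one_rpow])
  exact ⟨m, by rw [← coe_nnnorm]; exact_mod_cast this⟩

section MatrixLemmas

variable {l m o α : Type*} [Fintype m]

lemma Matrix.mul_apply_nonneg [Semiring α] [PartialOrder α] [IsOrderedRing α]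
    {A : Matrix l m α} {B : Matrix m o α} (hA : ∀ i j, 0 ≤ A i j) (hB : ∀ i j, 0 ≤ B i j)
    (i : l) (j : o) : 0 ≤ (A * B) i j := by
  rw [Matrix.mul_apply]
  exact Finset.sum_nonneg fun k _ => mul_nonneg (hA i k) (hB k j)

lemma Matrix.mulVec_nonneg [Semiring α] [PartialOrder α] [IsOrderedRing α] {A : Matrix l m α}
    (hA : ∀ i j, 0 ≤ A i j) {v : m → α} (hv : 0 ≤ v) : 0 ≤ A *ᵥ v :=
  fun i => Finset.sum_nonneg fun k _ => mul_nonneg (hA i k) (hv k)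

lemma Matrix.mulVec_eq_iff_eq_inv_mulVec [DecidableEq m] [CommRing α] {A : Matrix m m α}
    (hA : IsUnit A.det) {x w : m → α} : A *ᵥ x = w ↔ x = A⁻¹ *ᵥ w := by
  constructor
  · rintro rfl
    rw [Matrix.mulVec_mulVec, Matrix.nonsing_inv_mul _ hA, Matrix.one_mulVec]
  · rintro rfl
    rw [Matrix.mulVec_mulVec, Matrix.mul_nonsing_inv _ hA, Matrix.one_mulVec]

attribute [local instance] Matrix.linftyOpNormedAddCommGroup

lemma Matrix.linfty_opNorm_map_ofReal [Fintype l] (A : Matrix l m ℝ) :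
    ‖A.map Complex.ofReal‖ = ‖A‖ := by
  simp [Matrix.linfty_opNorm_def]

end MatrixLemmas

section MMatrix

attribute [local instance] Matrix.linftyOpNormedAddCommGroup Matrix.linftyOpNormedRing
  Matrix.linftyOpNormedAlgebra

variable {n : ℕ}

lemma specRad_nonneg (A : Matrix (Fin n) (Fin n) ℝ) : 0 ≤ specRad A :=
  Real.sSup_nonneg (by rintro _ ⟨μ, -, rfl⟩; exact norm_nonneg μ)

lemma norm_le_specRad {A : Matrix (Fin n) (Fin n) ℝ} {μ : ℂ}
    (hμ : μ ∈ spectrum ℂ (A.map Complex.ofReal)) : ‖μ‖ ≤ specRad A :=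
  le_csSup ⟨‖A.map Complex.ofReal‖ * ‖(1 : Matrix (Fin n) (Fin n) ℂ)‖,
    by rintro _ ⟨ν, hν, rfl⟩; exact spectrum.norm_le_norm_mul_of_mem hν⟩ ⟨μ, hμ, rfl⟩

lemma spectralRadius_map_ofReal_inv_smul_lt_one {P : Matrix (Fin n) (Fin n) ℝ} {t : ℝ}
    (hPt : specRad P < t) : spectralRadius ℂ ((t⁻¹ • P).map Complex.ofReal) < 1 := by
  have ht : 0 < t := (specRad_nonneg P).trans_lt hPt
  have hmap : (t⁻¹ • P).map Complex.ofReal =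
      Units.mk0 ((t : ℂ)⁻¹) (by exact_mod_cast (inv_pos.2 ht).ne') • P.map Complex.ofReal := by
    ext; simp
  refine lt_of_le_of_lt (iSup₂_le fun μ hμ => ?_)
    (ENNReal.ofReal_lt_one.2 ((div_lt_one ht).2 hPt))
  rw [hmap, spectrum.unit_smul_eq_smul] at hμ
  obtain ⟨ν, hν, rfl⟩ := hμ
  rw [← ENNReal.ofReal_coe_nnreal, coe_nnnorm]
  refine ENNReal.ofReal_le_ofReal ?_
  change ‖(t : ℂ)⁻¹ • ν‖ ≤ _
  rw [norm_smul, norm_inv, Complex.norm_real, Real.norm_of_nonneg ht.le, inv_mul_eq_div]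
  exact div_le_div_of_nonneg_right (norm_le_specRad hν) ht.le

lemma smul_one_sub_inv_apply_nonneg {P : Matrix (Fin n) (Fin n) ℝ} (hP : ∀ i j, 0 ≤ P i j)
    {t : ℝ} (hPt : specRad P < t) (i j : Fin n) : 0 ≤ (t • 1 - P)⁻¹ i j := by
  have ht : 0 < t := (specRad_nonneg P).trans_lt hPt
  set Q := t⁻¹ • P
  have hQ : ∀ i j, 0 ≤ Q i j := fun i j => mul_nonneg (inv_nonneg.2 ht.le) (hP i j)
  obtain ⟨m, hm⟩ := exists_norm_pow_lt_one_of_spectralRadius_lt_one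
    (spectralRadius_map_ofReal_inv_smul_lt_one hPt)
  replace hm : ‖Q ^ m‖ < 1 := by
    have hpow : (Q ^ m).map Complex.ofReal = Q.map Complex.ofReal ^ m :=
      Matrix.map_pow Q Complex.ofRealHom m
    exact (Matrix.linfty_opNorm_map_ofReal (Q ^ m)).symm.trans_lt (hpow ▸ hm)
  have hinv : (t • 1 - P) * (t⁻¹ • ((∑ k ∈ Finset.range m, Q ^ k) * ∑' k, (Q ^ m) ^ k)) = 1 := by
    rw [show t • 1 - P = t • (1 - Q) by rw [smul_sub, smul_inv_smul₀ ht.ne'],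
      smul_mul_smul_comm, mul_inv_cancel₀ ht.ne', one_smul]
    exact mul_geom_sum_mul_tsum_pow_eq_one hm
  rw [Matrix.inv_eq_right_inv hinv]
  refine mul_nonneg (inv_nonneg.2 ht.le)
    (Matrix.mul_apply_nonneg (fun i j => ?_) (fun i j => ?_) i j)
  · rw [Matrix.sum_apply]
    exact Finset.sum_nonneg fun k _ => Matrix.pow_apply_nonneg hQ k i j
  · have hsum : Summable fun k => (Q ^ m) ^ k := summable_geometric_of_norm_lt_one hm
    exact (Pi.hasSum.1 (Pi.hasSum.1 hsum.hasSum i) j).nonneg fun k =>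
      Matrix.pow_apply_nonneg (Matrix.pow_apply_nonneg hQ m) k i j

lemma IsNsMMat.inv_apply_nonneg {M : Matrix (Fin n) (Fin n) ℝ} (hM : IsNsMMat M) (i j : Fin n) :
    0 ≤ M⁻¹ i j := by
  obtain ⟨⟨s, P, hP, hPs, rfl⟩, hdet⟩ := hM
  have hinv : ContinuousAt (fun t : ℝ => (t • 1 - P)⁻¹) s :=
    (continuousAt_matrix_inv _ (hdet.unit_spec ▸ NormedRing.inverse_continuousAt hdet.unit)).comp
      (by fun_prop : Continuous fun t : ℝ => t • (1 : Matrix (Fin n) (Fin n) ℝ) - P).continuousAt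
  have hcont : ContinuousAt (fun t : ℝ => (t • 1 - P)⁻¹ i j) s :=
    (continuous_apply_apply i j).continuousAt.comp hinv
  exact ge_of_tendsto (hcont.tendsto.mono_left (nhdsWithin_le_nhds (s := Set.Ioi s)))
    (eventually_nhdsWithin_of_forall fun t ht =>
      smul_one_sub_inv_apply_nonneg hP (hPs.trans_lt ht) i j)

end MMatrix

section NonnegBilinear

variable {ι : Type*} {β : (ι → ℝ) →ₗ[ℝ] (ι → ℝ) →ₗ[ℝ] (ι → ℝ)} {c xs : ι → ℝ}

lemma apply_le_apply_of_nonneg (hβ : ∀ x y, 0 ≤ x → 0 ≤ y → 0 ≤ β x y) {x x' y y' : ι → ℝ}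
    (hx : 0 ≤ x) (hxx' : x ≤ x') (hy : 0 ≤ y) (hyy' : y ≤ y') : β x y ≤ β x' y' :=
  calc β x y ≤ β x y' :=
        sub_nonneg.1 (by simpa only [map_sub] using hβ x (y' - y) hx (sub_nonneg.2 hyy'))
    _ ≤ β x' y' := sub_nonneg.1 (by
        simpa only [map_sub, LinearMap.sub_apply] using
          hβ (x' - x) y' (sub_nonneg.2 hxx') (hy.trans hyy'))

lemma exists_fixedPoint_mem_Icc (hc : 0 ≤ c) (hβ : ∀ x y, 0 ≤ x → 0 ≤ y → 0 ≤ β x y)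
    {y : ι → ℝ} (hy : 0 ≤ y) (hsup : c + β y y ≤ y) :
    ∃ z ∈ Set.Icc 0 y, z = c + β z z := by
  have : Fact (0 ≤ y) := ⟨hy⟩
  let f : Set.Icc 0 y →o Set.Icc 0 y :=
    { toFun := fun z => ⟨c + β z z, add_nonneg hc (hβ _ _ z.2.1 z.2.1),
        (add_le_add_right (apply_le_apply_of_nonneg hβ z.2.1 z.2.2 z.2.1 z.2.2) c).trans hsup⟩
      monotone' := fun z w hzw =>
        add_le_add_right (apply_le_apply_of_nonneg hβ z.2.1 hzw z.2.1 hzw) c }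
  exact ⟨f.lfp, f.lfp.2, congrArg Subtype.val f.map_lfp.symm⟩

lemma IsLeast.le_of_supersolution (hxs : IsLeast {x | 0 ≤ x ∧ x = c + β x x} xs) (hc : 0 ≤ c)
    (hβ : ∀ x y, 0 ≤ x → 0 ≤ y → 0 ≤ β x y) {y : ι → ℝ} (hy : 0 ≤ y) (hsup : c + β y y ≤ y) :
    xs ≤ y := by
  obtain ⟨z, ⟨hz, hzy⟩, hfix⟩ := exists_fixedPoint_mem_Icc hc hβ hy hsup
  exact (hxs.2 ⟨hz, hfix⟩).trans hzy

variable [DecidableEq ι]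

variable (β) in
def bilinReach (S : Set ι) : Set ι :=
  {t | ∃ r ∈ S, ∃ s ∈ S, 0 < β (Pi.single r 1) (Pi.single s 1) t}

variable (β) in
def reachStep (S : Set ι) : Set ι := S ∪ bilinReach β S

lemma bilinReach_mono {S T : Set ι} (h : S ⊆ T) : bilinReach β S ⊆ bilinReach β T :=
  fun _ ⟨r, hr, s, hs, hrst⟩ => ⟨r, h hr, s, h hs, hrst⟩

lemma bilinReach_iUnion_iterate_reachStep_subset (S : Set ι) :
    bilinReach β (⋃ k, (reachStep β)^[k] S) ⊆ ⋃ k, (reachStep β)^[k] S := by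
  have hmono : Monotone fun k => (reachStep β)^[k] S := fun k l hkl =>
    Function.monotone_iterate_of_id_le (fun _ => Set.subset_union_left) hkl S
  rintro t ⟨r, hr, s, hs, hrst⟩
  obtain ⟨k, hk⟩ := Set.mem_iUnion.1 hr
  obtain ⟨l, hl⟩ := Set.mem_iUnion.1 hs
  refine Set.mem_iUnion.2 ⟨max k l + 1, ?_⟩
  rw [Function.iterate_succ_apply']
  exact Or.inr ⟨r, hmono (le_max_left k l) hk, s, hmono (le_max_right k l) hl, hrst⟩

lemma chain_subset_of_bilinReach_subset {N : ℕ} {S : ℕ → Set ι} {C : Set ι} (h1 : S 1 ⊆ C)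
    (hC : bilinReach β C ⊆ C) (hS : ∀ h, 1 ≤ h → h < N → S (h + 1) \ S h ⊆ bilinReach β (S h)) :
    ∀ h, 1 ≤ h → h ≤ N → S h ⊆ C := by
  intro h h1h
  induction h, h1h using Nat.le_induction with
  | base => exact fun _ => h1
  | succ h h1h ih =>
    intro hhN t ht
    by_cases htS : t ∈ S h
    · exact ih (by omega) htS
    · exact hC (bilinReach_mono (ih (by omega)) (hS h h1h hhN ⟨ht, htS⟩))

variable [Fintype ι]

lemma LinearMap.apply_apply_eq_sum_single {R M : Type*} [CommSemiring R] [AddCommMonoid M]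
    [Module R M] (f : (ι → R) →ₗ[R] (ι → R) →ₗ[R] M) (x y : ι → R) :
    f x y = ∑ r, ∑ s, (x r * y s) • f (Pi.single r 1) (Pi.single s 1) := by
  have h (v : ι → R) : v = ∑ r, v r • Pi.single r 1 := by
    ext; simp [Finset.sum_apply, Pi.single_apply]
  conv_lhs => rw [h x, h y]
  simp only [map_sum, map_smul, LinearMap.sum_apply, LinearMap.smul_apply, Finset.smul_sum,
    smul_smul]
  rw [Finset.sum_comm]
  simp only [mul_comm]

lemma mul_mul_apply_single_le (hβ : ∀ x y, 0 ≤ x → 0 ≤ y → 0 ≤ β x y) {x y : ι → ℝ}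
    (hx : 0 ≤ x) (hy : 0 ≤ y) (r s t : ι) :
    x r * y s * β (Pi.single r 1) (Pi.single s 1) t ≤ β x y t := by
  have hterm (r' s' : ι) : 0 ≤ x r' * y s' * β (Pi.single r' 1) (Pi.single s' 1) t :=
    mul_nonneg (mul_nonneg (hx r') (hy s'))
      (hβ _ _ (Pi.single_nonneg.2 zero_le_one) (Pi.single_nonneg.2 zero_le_one) t)
  rw [β.apply_apply_eq_sum_single x y]
  simp only [Finset.sum_apply, Pi.smul_apply, smul_eq_mul]
  calc x r * y s * β (Pi.single r 1) (Pi.single s 1) t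
      ≤ ∑ s', x r * y s' * β (Pi.single r 1) (Pi.single s' 1) t :=
        Finset.single_le_sum (fun s' _ => hterm r s') (Finset.mem_univ s)
    _ ≤ ∑ r', ∑ s', x r' * y s' * β (Pi.single r' 1) (Pi.single s' 1) t :=
        Finset.single_le_sum (f := fun r' => ∑ s', x r' * y s' * _)
          (fun r' _ => Finset.sum_nonneg fun s' _ => hterm r' s') (Finset.mem_univ r)

lemma bilinReach_support_subset (hβ : ∀ x y, 0 ≤ x → 0 ≤ y → 0 ≤ β x y) {x : ι → ℝ}
    (hx : 0 ≤ x) (hxx : β x x ≤ x) : bilinReach β {t | 0 < x t} ⊆ {t | 0 < x t} := by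
  rintro t ⟨r, hr, s, hs, hrst⟩
  calc 0 < x r * x s * β (Pi.single r 1) (Pi.single s 1) t := mul_pos (mul_pos hr hs) hrst
    _ ≤ β x x t := mul_mul_apply_single_le hβ hx hx r s t
    _ ≤ x t := hxx t

lemma apply_nonpos_of_notMem_bilinReach {S : Set ι} {x : ι → ℝ} (hx : 0 ≤ x)
    (hxS : ∀ r ∉ S, x r = 0) {t : ι} (ht : t ∉ bilinReach β S) : β x x t ≤ 0 := by
  rw [β.apply_apply_eq_sum_single x x]
  simp only [Finset.sum_apply, Pi.smul_apply, smul_eq_mul]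
  refine Finset.sum_nonpos fun r _ => Finset.sum_nonpos fun s _ => ?_
  by_cases hrs : r ∈ S ∧ s ∈ S
  · exact mul_nonpos_of_nonneg_of_nonpos (mul_nonneg (hx r) (hx s))
      (not_lt.1 fun hpos => ht ⟨r, hrs.1, s, hrs.2, hpos⟩)
  · rcases not_and_or.1 hrs with hr | hs
    · simp [hxS r hr]
    · simp [hxS s hs]

/-- Restricted to `S`, the minimal solution is still a supersolution. -/
lemma IsLeast.support_subset (hxs : IsLeast {x | 0 ≤ x ∧ x = c + β x x} xs) (hc : 0 ≤ c)
    (hβ : ∀ x y, 0 ≤ x → 0 ≤ y → 0 ≤ β x y) {S : Set ι} (hcS : {t | 0 < c t} ⊆ S)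
    (hS : bilinReach β S ⊆ S) : {t | 0 < xs t} ⊆ S := by
  obtain ⟨hxs0, hxs_fix⟩ := hxs.1
  set y := S.indicator xs
  have hy : 0 ≤ y := Set.indicator_nonneg fun t _ => hxs0 t
  have hyxs : y ≤ xs := Set.indicator_le_self' fun t _ => hxs0 t
  have hsup : c + β y y ≤ y := by
    intro t
    by_cases ht : t ∈ S
    · calc c t + β y y t ≤ c t + β xs xs t :=
            add_le_add_right (apply_le_apply_of_nonneg hβ hy hyxs hy hyxs t) _
        _ = y t := (congrFun hxs_fix t).symm.trans (Set.indicator_of_mem ht xs).symm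
    · have hct : c t ≤ 0 := not_lt.1 fun hpos => ht (hcS hpos)
      have hyt : β y y t ≤ 0 := apply_nonpos_of_notMem_bilinReach hy
        (fun r hr => Set.indicator_of_notMem hr xs) (fun h => ht (hS h))
      simpa [y, Set.indicator_of_notMem ht] using add_nonpos hct hyt
  intro t ht
  by_contra htS
  exact not_lt.2 ((hxs.le_of_supersolution hc hβ hy hsup t).trans_eq
    (Set.indicator_of_notMem htS xs)) ht

theorem IsLeast.pos_iff_exists_chain (hxs : IsLeast {x | 0 ≤ x ∧ x = c + β x x} xs)
    (hc : 0 ≤ c) (hβ : ∀ x y, 0 ≤ x → 0 ≤ y → 0 ≤ β x y) (i : ι) :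
    0 < xs i ↔ ∃ (N : ℕ) (S : ℕ → Set ι), 1 ≤ N ∧ S 1 = {t | 0 < c t} ∧
      (∀ h, 1 ≤ h → h < N → S h ⊆ S (h + 1)) ∧
      (∀ h, 1 ≤ h → h < N → S (h + 1) \ S h ⊆ bilinReach β (S h)) ∧ i ∈ S N := by
  obtain ⟨hxs0, hxs_fix⟩ := hxs.1
  constructor
  · intro hi
    obtain ⟨k, hk⟩ := Set.mem_iUnion.1 <| hxs.support_subset hc hβ
      (Set.subset_iUnion (fun k => (reachStep β)^[k] {t | 0 < c t}) 0)
      (bilinReach_iUnion_iterate_reachStep_subset _) hi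
    refine ⟨k + 1, fun h => (reachStep β)^[h - 1] {t | 0 < c t}, by omega, rfl,
      ?_, ?_, by simpa using hk⟩
    · rintro (_ | h) hh - <;> simp only [Nat.add_sub_cancel, Function.iterate_succ_apply']
      · omega
      · exact Set.subset_union_left
    · rintro (_ | h) hh - <;> simp only [Nat.add_sub_cancel, Function.iterate_succ_apply']
      · omega
      · exact fun t ht => ht.1.resolve_left ht.2
  · rintro ⟨N, S, hN, hS1, -, hS, hiN⟩
    have hcxs : {t | 0 < c t} ⊆ {t | 0 < xs t} := fun t (ht : 0 < c t) =>
      ht.trans_le ((le_add_of_nonneg_right (hβ _ _ hxs0 hxs0 t)).trans_eq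
        (congrFun hxs_fix t).symm)
    have hxs_closed := bilinReach_support_subset hβ hxs0
      ((le_add_of_nonneg_left hc).trans_eq hxs_fix.symm)
    exact chain_subset_of_bilinReach_subset (hS1 ▸ hcxs) hxs_closed hS N hN le_rfl hiN

end NonnegBilinear

/-- Characterization of the positive entries of the minimal solution `x*` of the QVE:
`(x*)_i > 0` iff there is a "positivity-showing" sequence of index sets
`S₁ ⊆ S₂ ⊆ … ⊆ S_N` with `S₁ = {h : (M⁻¹a)_h > 0}`, each new index `t ∈ S_{h+1} \ S_h`
witnessed by `r, s ∈ S_h` with `(M⁻¹B)_{rst} > 0`, and `i ∈ S_N`.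
Here `(M⁻¹B)_{rst} = (M⁻¹ b(e_r, e_s))_t`. -/
theorem qve_positivity_pattern {n : ℕ}
    (M : Matrix (Fin n) (Fin n) ℝ) (hM : IsNsMMat M)
    (a : Fin n → ℝ) (ha : 0 ≤ a)
    (b : (Fin n → ℝ) →ₗ[ℝ] (Fin n → ℝ) →ₗ[ℝ] (Fin n → ℝ))
    (hb : ∀ x y : Fin n → ℝ, 0 ≤ x → 0 ≤ y → 0 ≤ b x y)
    (xs : Fin n → ℝ) (hxs_nonneg : 0 ≤ xs) (hxs_sol : M *ᵥ xs = a + b xs xs)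
    (hxs_min : ∀ s : Fin n → ℝ, 0 ≤ s → M *ᵥ s = a + b s s → xs ≤ s)
    (i : Fin n) :
    0 < xs i ↔
      ∃ (N : ℕ) (S : ℕ → Set (Fin n)),
        1 ≤ N ∧
        S 1 = {h : Fin n | 0 < (M⁻¹ *ᵥ a) h} ∧
        (∀ h, 1 ≤ h → h < N → S h ⊆ S (h + 1)) ∧
        (∀ h, 1 ≤ h → h < N → ∀ t ∈ S (h + 1) \ S h,
          ∃ r ∈ S h, ∃ s ∈ S h,
            0 < (M⁻¹ *ᵥ b (Pi.single r 1) (Pi.single s 1)) t) ∧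
        i ∈ S N := by
  let β := b.compr₂ (Matrix.mulVecLin M⁻¹)
  have hβ : ∀ x y, 0 ≤ x → 0 ≤ y → 0 ≤ β x y := fun x y hx hy =>
    Matrix.mulVec_nonneg hM.inv_apply_nonneg (hb x y hx hy)
  have hsol (x : Fin n → ℝ) : M *ᵥ x = a + b x x ↔ x = M⁻¹ *ᵥ a + β x x := by
    rw [Matrix.mulVec_eq_iff_eq_inv_mulVec hM.2, Matrix.mulVec_add]
    rfl
  have hxs : IsLeast {x | 0 ≤ x ∧ x = M⁻¹ *ᵥ a + β x x} xs :=
    ⟨⟨hxs_nonneg, (hsol xs).1 hxs_sol⟩, fun y ⟨hy, hy_fix⟩ => hxs_min y hy ((hsol y).2 hy_fix)⟩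
  exact hxs.pos_iff_exists_chain (Matrix.mulVec_nonneg hM.inv_apply_nonneg ha) hβ i
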